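/- If all eigenvalues of the n×n matrix A have strictly negative real part, then the integral P = ∫₀^∞ e^{At} B Bᵀ e^{Aᵀt} dt converges and satisfies the Lyapunov equation A P + P Aᵀ + B Bᵀ = 0. -/

import Mathlib

/-!
On a generalized eigenspace of `A` (over `ℂ`) with eigenvalue `μ`, `exp (t • A)` acts as
`exp (t μ)` times a polynomial in `t`; since these spaces span, `exp (t • A) = O(exp (c t))`
for some `c < 0`, and the same holds for `exp (t • Aᵀ) = (exp (t • A))ᵀ`. Hence the integrand
`g t = exp (t • A) * B * Bᵀ * exp (t • Aᵀ)` is integrable on `(0, ∞)` and tends to `0`. As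
`g' = A g + g Aᵀ` and `g 0 = B Bᵀ`, integrating over `(0, ∞)` gives `A P + P Aᵀ = - B Bᵀ`.
-/

open Matrix MeasureTheory

attribute [local instance] Matrix.linftyOpNormedRing Matrix.linftyOpNormedAlgebra

noncomputable def gramianIntegrand {n m : ℕ} (A : Matrix (Fin n) (Fin n) ℝ)
    (B : Matrix (Fin n) (Fin m) ℝ) (t : ℝ) : Matrix (Fin n) (Fin n) ℝ :=
  NormedSpace.exp (t • A) * B * Bᵀ * NormedSpace.exp (t • Aᵀ)

open NormedSpace Asymptotics Filter Topology Set
open scoped Nat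

theorem LinearMap.isBigO_comp_of_finiteDimensional {𝕜 α E F G : Type*} [NontriviallyNormedField 𝕜]
    [CompleteSpace 𝕜] [NormedAddCommGroup E] [NormedSpace 𝕜 E] [FiniteDimensional 𝕜 E]
    [NormedAddCommGroup F] [NormedSpace 𝕜 F] [Norm G] (L : E →ₗ[𝕜] F) {f : α → E} {g : α → G}
    {l : Filter α} (h : f =O[l] g) : (fun x => L (f x)) =O[l] g :=
  ((LinearMap.toContinuousLinearMap L).isBigO_comp f l).trans h

theorem Module.End.mem_spectrum_of_mem_maxGenEigenspace {R M : Type*} [CommRing R]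
    [AddCommGroup M] [Module R M] {f : Module.End R M} {μ : R} {x : M}
    (hx : x ∈ f.maxGenEigenspace μ) (hx0 : x ≠ 0) :
    μ ∈ spectrum R f := by
  have hμ : f.HasUnifEigenvalue μ ⊤ := fun h => hx0 ((Submodule.mem_bot R).1 (h ▸ hx))
  exact ((hasUnifEigenvalue_iff_hasUnifEigenvalue_one (by simp)).1 hμ).mem_spectrum

theorem integrableOn_Ioi_of_isBigO_exp {E : Type*} [NormedAddCommGroup E] {f : ℝ → E} {a c : ℝ}
    (hc : c < 0) (hf : ContinuousOn f (Ici a)) (ho : f =O[atTop] fun t => Real.exp (c * t)) :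
    IntegrableOn f (Ioi a) :=
  ((hf.locallyIntegrableOn measurableSet_Ici).integrableOn_of_isBigO_atTop ho
    ⟨Ioi a, Ioi_mem_atTop a, by simpa using exp_neg_integrableOn_Ioi a (neg_pos.2 hc)⟩).mono_set
    Ioi_subset_Ici_self

section Lyapunov

variable {𝔸 : Type*} [NormedRing 𝔸] [NormedAlgebra ℝ 𝔸]

theorem isBigO_exp_smul_mul_mul_exp_smul {a b : 𝔸} (q : 𝔸) {c c' : ℝ}
    (ha : (fun t : ℝ => exp (t • a)) =O[atTop] fun t => Real.exp (c * t))
    (hb : (fun t : ℝ => exp (t • b)) =O[atTop] fun t => Real.exp (c' * t)) :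
    (fun t : ℝ => exp (t • a) * q * exp (t • b)) =O[atTop] fun t => Real.exp ((c + c') * t) := by
  refine ((ha.mul (isBigO_const_const q one_ne_zero _)).mul hb).congr_right fun t => ?_
  rw [mul_one, ← Real.exp_add, add_mul]

variable [CompleteSpace 𝔸]

theorem hasDerivAt_exp_smul_mul_mul_exp_smul (a q b : 𝔸) (t : ℝ) :
    HasDerivAt (fun s : ℝ => exp (s • a) * q * exp (s • b))
      (a * (exp (t • a) * q * exp (t • b)) + exp (t • a) * q * exp (t • b) * b) t := by
  refine (((hasDerivAt_exp_smul_const' a t).mul_const q).mul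
    (hasDerivAt_exp_smul_const b t)).congr_deriv ?_
  simp only [mul_assoc]

theorem mul_integral_add_integral_mul_add_eq_zero (a q b : 𝔸)
    (hint : IntegrableOn (fun t : ℝ => exp (t • a) * q * exp (t • b)) (Ioi 0))
    (hlim : Tendsto (fun t : ℝ => exp (t • a) * q * exp (t • b)) atTop (𝓝 0)) :
    a * (∫ t in Ioi (0 : ℝ), exp (t • a) * q * exp (t • b)) +
      (∫ t in Ioi (0 : ℝ), exp (t • a) * q * exp (t • b)) * b + q = 0 := by
  set g := fun t : ℝ => exp (t • a) * q * exp (t • b)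
  have hftc : ∫ t in Ioi (0 : ℝ), (a * g t + g t * b) = 0 - g 0 :=
    integral_Ioi_of_hasDerivAt_of_tendsto' (fun t _ => hasDerivAt_exp_smul_mul_mul_exp_smul a q b t)
      ((hint.const_mul a).add (hint.mul_const b)) hlim
  have hleft : ∫ t in Ioi (0 : ℝ), a * g t = a * ∫ t in Ioi (0 : ℝ), g t :=
    (ContinuousLinearMap.mul ℝ 𝔸 a).integral_comp_comm hint
  have hright : ∫ t in Ioi (0 : ℝ), g t * b = (∫ t in Ioi (0 : ℝ), g t) * b :=
    ((ContinuousLinearMap.mul ℝ 𝔸).flip b).integral_comp_comm hint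
  rw [integral_add (hint.const_mul a) (hint.mul_const b), hleft, hright] at hftc
  simp [g, hftc]

end Lyapunov

section

variable {ι : Type*} [Fintype ι] [DecidableEq ι]

theorem Matrix.exp_smul_mulVec_of_pow_mulVec_eq_zero {𝕜 : Type*} [RCLike 𝕜] {N : Matrix ι ι 𝕜}
    {v : ι → 𝕜} {k : ℕ} (hk : N ^ k *ᵥ v = 0) (t : ℝ) :
    exp (t • N) *ᵥ v = ∑ j ∈ Finset.range k, ((j ! : ℝ)⁻¹ * t ^ j) • (N ^ j *ᵥ v) := by
  have hsum := (exp_series_hasSum_exp' (𝕂 := ℝ) (t • N)).map (mulVec.addMonoidHomLeft v)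
    (continuous_id.matrix_mulVec continuous_const)
  refine hsum.unique (hasSum_sum_of_ne_finset_zero fun j hj => ?_) |>.trans
    (Finset.sum_congr rfl fun j _ => ?_)
  · obtain ⟨i, rfl⟩ := Nat.exists_eq_add_of_le (not_lt.1 (Finset.mem_range.not.1 hj))
    simp only [Function.comp_apply, mulVec.addMonoidHomLeft, AddMonoidHom.coe_mk, ZeroHom.coe_mk]
    rw [smul_pow, smul_mulVec, smul_mulVec, add_comm, pow_add N, ← mulVec_mulVec, hk, mulVec_zero,
      smul_zero, smul_zero]
  · simp only [Function.comp_apply, mulVec.addMonoidHomLeft, AddMonoidHom.coe_mk, ZeroHom.coe_mk]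
    rw [smul_pow, smul_mulVec, smul_mulVec, smul_smul]

theorem Matrix.exp_smul_eq_cexp_smul_exp_smul_sub (M : Matrix ι ι ℂ) (μ : ℂ) (t : ℝ) :
    exp (t • M) = Complex.exp (t * μ) • exp (t • (M - μ • 1)) := by
  have hsplit : t • M = algebraMap ℂ _ (t * μ) + t • (M - μ • 1) := by
    rw [Algebra.algebraMap_eq_smul_one, smul_sub, ← smul_assoc, Complex.real_smul]
    abel
  rw [hsplit, exp_add_of_commute _ _ (Algebra.commute_algebraMap_left _ _)]
  have hscalar :
      exp (algebraMap ℂ (Matrix ι ι ℂ) (t * μ)) = algebraMap ℂ _ (Complex.exp (t * μ)) := by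
    rw [Complex.exp_eq_exp_ℂ]
    exact (algebraMap_exp_comm _).symm
  rw [hscalar, ← Algebra.smul_def]

theorem Matrix.isBigO_exp_smul_mulVec_of_mem_maxGenEigenspace {M : Matrix ι ι ℂ} {μ : ℂ}
    {v : ι → ℂ} (hv : v ∈ Module.End.maxGenEigenspace (toLin' M) μ) {b : ℝ} (hb : μ.re < b) :
    (fun t : ℝ => exp (t • M) *ᵥ v) =O[atTop] fun t => Real.exp (b * t) := by
  obtain ⟨k, hk⟩ := (Module.End.mem_maxGenEigenspace _ _ _).1 hv
  set N := M - μ • 1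
  have hNk : N ^ k *ᵥ v = 0 := by
    rwa [← toLin'_apply, toLin'_pow, map_sub, map_smul, toLin'_one]
  have hscalar : (fun t : ℝ => Complex.exp (t * μ)) =O[atTop] fun t => Real.exp (μ.re * t) :=
    isBigO_of_le _ fun t => by simp [Complex.norm_exp, mul_comm]
  have hpoly : (fun t : ℝ => ∑ j ∈ Finset.range k, ((j ! : ℝ)⁻¹ * t ^ j) • (N ^ j *ᵥ v))
      =O[atTop] fun t => Real.exp ((b - μ.re) * t) := by
    refine IsBigO.fun_sum fun j _ => ?_
    have hconst : (fun _ : ℝ => N ^ j *ᵥ v) =O[atTop] fun _ => (1 : ℝ) :=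
      isBigO_const_const _ one_ne_zero _
    have hpow := (isLittleO_pow_exp_pos_mul_atTop j (sub_pos.2 hb)).isBigO
    simpa using (hpow.const_mul_left (j ! : ℝ)⁻¹).smul hconst
  refine (hscalar.smul hpoly).congr' (Eventually.of_forall fun t => ?_)
    (Eventually.of_forall fun t => ?_)
  · dsimp only
    rw [exp_smul_eq_cexp_smul_exp_smul_sub M μ, smul_mulVec,
      exp_smul_mulVec_of_pow_mulVec_eq_zero hNk]
  · dsimp only
    rw [smul_eq_mul, ← Real.exp_add]
    ring_nf

theorem Matrix.isBigO_exp_smul_mulVec {M : Matrix ι ι ℂ} {b : ℝ}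
    (hM : ∀ μ ∈ spectrum ℂ M, μ.re < b) (v : ι → ℂ) :
    (fun t : ℝ => exp (t • M) *ᵥ v) =O[atTop] fun t => Real.exp (b * t) := by
  have hv : v ∈ ⨆ μ, Module.End.maxGenEigenspace (toLin' M) μ := by
    rw [Module.End.iSup_maxGenEigenspace_eq_top]
    trivial
  refine Submodule.iSup_induction _
    (motive := fun w => (fun t : ℝ => exp (t • M) *ᵥ w) =O[atTop] fun t => Real.exp (b * t)) hv
    (fun μ w hw => ?_) (by simpa only [mulVec_zero] using isBigO_zero _ _)
    fun w w' hw hw' => by simpa only [mulVec_add] using hw.add hw'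
  rcases eq_or_ne w 0 with rfl | hw0
  · simpa only [mulVec_zero] using isBigO_zero _ _
  refine isBigO_exp_smul_mulVec_of_mem_maxGenEigenspace hw (hM μ ?_)
  rw [← spectrum_toLin']
  exact Module.End.mem_spectrum_of_mem_maxGenEigenspace hw hw0

theorem Matrix.isBigO_exp_smul {M : Matrix ι ι ℂ} {b : ℝ} (hM : ∀ μ ∈ spectrum ℂ M, μ.re < b) :
    (fun t : ℝ => exp (t • M)) =O[atTop] fun t => Real.exp (b * t) := by
  have hcols : (fun t : ℝ => fun j => exp (t • M) *ᵥ Pi.single j 1) =O[atTop]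
      fun t => Real.exp (b * t) :=
    isBigO_pi.2 fun j => isBigO_exp_smul_mulVec hM _
  refine (((transposeLinearEquiv ι ι ℂ ℂ).toLinearMap ∘ₗ (ofLinearEquiv ℂ).toLinearMap
    ).isBigO_comp_of_finiteDimensional hcols).congr_left fun t => ?_
  ext i j
  simp

theorem Matrix.map_ofReal_exp (A : Matrix ι ι ℝ) :
    (exp A).map Complex.ofReal = exp (A.map Complex.ofReal) :=
  map_exp (Complex.ofRealHom.mapMatrix (m := ι))
    (continuous_id.matrix_map Complex.continuous_ofReal) A

theorem Matrix.isBigO_exp_smul_of_forall_re_lt {A : Matrix ι ι ℝ} {b : ℝ}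
    (hA : ∀ μ ∈ spectrum ℂ (A.map Complex.ofReal), μ.re < b) :
    (fun t : ℝ => exp (t • A)) =O[atTop] fun t => Real.exp (b * t) := by
  refine (Complex.reLm.mapMatrix.isBigO_comp_of_finiteDimensional (isBigO_exp_smul hA)).congr_left
    fun t => ?_
  have hsmul : t • A.map Complex.ofReal = (t • A).map Complex.ofReal := by
    ext i j
    simp
  ext i j
  rw [hsmul, ← map_ofReal_exp]
  simp

theorem Matrix.exists_neg_isBigO_exp_smul {A : Matrix ι ι ℝ}
    (hA : ∀ μ ∈ spectrum ℂ (A.map Complex.ofReal), μ.re < 0) :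
    ∃ b < 0, (fun t : ℝ => exp (t • A)) =O[atTop] fun t => Real.exp (b * t) := by
  have hnear : ∀ᶠ b in 𝓝[<] (0 : ℝ), ∀ μ ∈ spectrum ℂ (A.map Complex.ofReal), μ.re < b :=
    (eventually_all_finite (Matrix.finite_spectrum _)).2 fun μ hμ =>
      nhdsWithin_le_nhds (lt_mem_nhds (hA μ hμ))
  obtain ⟨b, hb, hb0⟩ := (hnear.and self_mem_nhdsWithin).exists
  exact ⟨b, hb0, isBigO_exp_smul_of_forall_re_lt hb⟩

end

theorem controllability_gramian_lyapunov {n m : ℕ}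
    (A : Matrix (Fin n) (Fin n) ℝ) (B : Matrix (Fin n) (Fin m) ℝ)
    (hA : ∀ μ : ℂ, μ ∈ spectrum ℂ (A.map Complex.ofReal) → μ.re < 0) :
    @IntegrableOn _ _ _ _ SeminormedAddGroup.toContinuousENorm (gramianIntegrand A B)
      (Set.Ioi (0 : ℝ)) volume ∧
    A * (∫ t in Set.Ioi (0 : ℝ), gramianIntegrand A B t) +
      (∫ t in Set.Ioi (0 : ℝ), gramianIntegrand A B t) * Aᵀ + B * Bᵀ = 0 := by
  obtain ⟨c, hc, hexp⟩ := exists_neg_isBigO_exp_smul hA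
  have hexpT : (fun t : ℝ => exp (t • Aᵀ)) =O[atTop] fun t => Real.exp (c * t) :=
    ((transposeLinearEquiv _ _ ℝ ℝ).toLinearMap.isBigO_comp_of_finiteDimensional hexp).congr_left
      fun t => by simp [← transpose_smul, exp_transpose]
  have hgram : gramianIntegrand A B = fun t => exp (t • A) * (B * Bᵀ) * exp (t • Aᵀ) :=
    funext fun t => by simp only [gramianIntegrand, Matrix.mul_assoc]
  have hdecay := isBigO_exp_smul_mul_mul_exp_smul (B * Bᵀ) hexp hexpT
  have hcont : Continuous fun t : ℝ => exp (t • A) * (B * Bᵀ) * exp (t • Aᵀ) :=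
    continuous_iff_continuousAt.2 fun t =>
      (hasDerivAt_exp_smul_mul_mul_exp_smul A (B * Bᵀ) Aᵀ t).continuousAt
  have hint := integrableOn_Ioi_of_isBigO_exp (a := 0) (by linarith) hcont.continuousOn hdecay
  have hlim := hdecay.trans_tendsto
    (Real.tendsto_exp_atBot.comp (tendsto_id.const_mul_atTop_of_neg (by linarith)))
  rw [hgram]
  exact ⟨hint, mul_integral_add_integral_mul_add_eq_zero A (B * Bᵀ) Aᵀ hint hlim⟩
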